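/- arXiv:0908.3850 — 3 statements merged into one kernel-verified Lean document; each statement's English description precedes it below -/
import Mathlib

section
/- Let f_n be defined by f_0 = 1, f_1 = 0, f_{n+1}(x) = x·f_n(x) + f_{n-1}(x). Then for every real number ξ ≠ 0 and every natural number n, f_n(ξ - ξ^{-1}) = (ξ^{n-1} - (-ξ)^{-(n-1)}) / (ξ + ξ^{-1}), where the powers with exponent n-1 are integer powers (zpow). -/
open Polynomial

/-- The polynomials `f₀ = 1`, `f₁ = 0`, `f_{n+1}(x) = x·f_n(x) + f_{n-1}(x)`. -/
noncomputable def isingF : ℕ → Polynomial ℤ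
  | 0 => 1
  | 1 => 0
  | n + 2 => X * isingF (n + 1) + isingF n

/-!
The numbers `ξ` and `-ξ⁻¹` are the two roots of `t² = x t + 1` for `x = ξ - ξ⁻¹`, so both
geometric sequences `ξ ^ k` and `(-ξ⁻¹) ^ k = (-ξ) ^ (-k)` obey the recurrence defining the `f_n`
at `x`. So does their difference, which vanishes at `k = 0` and equals `ξ + ξ⁻¹` at `k = -1`;
dividing by `ξ + ξ⁻¹` and shifting by one gives the initial values `f₀ = 1`, `f₁ = 0`.
-/

theorem aeval_isingF_eq_of_recurrence {A : Type*} [CommRing A] (x : A) (u : ℕ → A)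
    (h₀ : u 0 = 1) (h₁ : u 1 = 0) (hu : ∀ n, u (n + 2) = x * u (n + 1) + u n) (n : ℕ) :
    aeval x (isingF n) = u n := by
  induction n using Nat.twoStepInduction with
  | zero => simp [isingF, h₀]
  | one => simp [isingF, h₁]
  | more n ih₀ ih₁ => rw [isingF, map_add, map_mul, aeval_X, ih₀, ih₁, hu]

theorem zpow_add_one_of_sq_eq {K : Type*} [Field K] {r x : K} (hr : r ≠ 0)
    (h : r ^ 2 = x * r + 1) (k : ℤ) : r ^ (k + 1) = x * r ^ k + r ^ (k - 1) := by
  calc r ^ (k + 1) = r ^ (k - 1) * r ^ 2 := by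
        rw [← zpow_natCast, ← zpow_add₀ hr]; ring_nf
    _ = x * r ^ k + r ^ (k - 1) := by
        rw [h, mul_add, mul_one, ← mul_assoc, mul_comm _ x, mul_assoc, ← zpow_add_one₀ hr,
          sub_add_cancel]

theorem sq_eq_sub_inv_mul_add_one {K : Type*} [Field K] {ξ : K} (hξ : ξ ≠ 0) :
    ξ ^ 2 = (ξ - ξ⁻¹) * ξ + 1 := by
  field_simp; ring

theorem neg_inv_sq_eq_sub_inv_mul_add_one {K : Type*} [Field K] {ξ : K} (hξ : ξ ≠ 0) :
    (-ξ⁻¹) ^ 2 = (ξ - ξ⁻¹) * (-ξ⁻¹) + 1 := by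
  field_simp; ring

theorem add_inv_ne_zero {K : Type*} [Field K] [LinearOrder K] [IsStrictOrderedRing K] {ξ : K}
    (hξ : ξ ≠ 0) : ξ + ξ⁻¹ ≠ 0 := by
  have : ξ * (ξ + ξ⁻¹) = ξ ^ 2 + 1 := by field_simp
  intro h
  rw [h, mul_zero] at this
  linarith [sq_nonneg ξ]

theorem isingF_eval_xi (ξ : ℝ) (hξ : ξ ≠ 0) (n : ℕ) :
    Polynomial.aeval (ξ - ξ⁻¹) (isingF n)
      = (ξ ^ ((n : ℤ) - 1) - (-ξ) ^ (-((n : ℤ) - 1))) / (ξ + ξ⁻¹) := by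
  have hneg : ∀ k : ℤ, (-ξ) ^ (-k) = (-ξ⁻¹) ^ k := fun k => by rw [← inv_zpow', neg_inv]
  have hinv : -ξ⁻¹ ≠ 0 := neg_ne_zero.mpr (inv_ne_zero hξ)
  rw [hneg]
  refine aeval_isingF_eq_of_recurrence (ξ - ξ⁻¹)
    (fun m : ℕ => (ξ ^ ((m : ℤ) - 1) - (-ξ⁻¹) ^ ((m : ℤ) - 1)) / (ξ + ξ⁻¹))
    ?_ (by simp) (fun m => ?_) n
  · rw [div_eq_one_iff_eq (add_inv_ne_zero hξ)]
    simp [add_comm]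
  · push_cast
    rw [show (m : ℤ) + 2 - 1 = m + 1 by ring, show (m : ℤ) + 1 - 1 = m by ring,
      zpow_add_one_of_sq_eq hξ (sq_eq_sub_inv_mul_add_one hξ),
      zpow_add_one_of_sq_eq hinv (neg_inv_sq_eq_sub_inv_mul_add_one hξ)]
    ring
end

section
/- Let G = (V,E) be a finite simple graph, let β : E → ℝ be edge weights and ξ : V → ℝ with ξ_i ≠ 0 for all i. Then Σ_{s ⊆ E} (Π_{e ∈ s} β_e) · Π_{i ∈ V} f_{deg_s(i)}(ξ_i - ξ_i^{-1}) = Σ_{x : V → {±1}} Π_{e={i,j} ∈ E} (1 + x_i·x_j·β_e·ξ_i^{-x_i}·ξ_j^{-x_j}) · Π_{i ∈ V} ξ_i^{x_i}/(ξ_i + ξ_i^{-1}), where the sum on the right is over all assignments x of ±1 to the vertices. -/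
/-! With `wᵢ = -xᵢ ξᵢ^{-xᵢ}`, each edge factor is `1 + β_e wᵢ wⱼ` (the two signs cancel), so
expanding the product over edges gives `∑_s ∏_{e ∈ s} β_e ∏ᵢ wᵢ^{deg_s i}`. After exchanging the
sums, the sum over spins factors over the vertices, and the vertex sum
`∑_{x = ±1} w^d ξ^x = ξ^d ξ⁻¹ + (-ξ⁻¹)^d ξ` equals `(ξ + ξ⁻¹) f_d(ξ - ξ⁻¹)`. This is a Binet
formula: `ξ` and `-ξ⁻¹` are the roots of `z² = (ξ - ξ⁻¹) z + 1`, so both sides satisfy the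
recurrence of `f_d`. -/

open Polynomial

/-- The degree of vertex `i` in the spanning subgraph `(V, s)`:
the number of edges of `s` containing `i`. -/
def degIn {V : Type*} [DecidableEq V] (s : Finset (Sym2 V)) (i : V) : ℕ :=
  (s.filter (fun e => i ∈ e)).card

/-- `±1` value attached to a Boolean spin. -/
def spin (b : Bool) : ℤ := if b then 1 else -1

/-- The factor `1 + xᵢ·xⱼ·β_e·ξᵢ^{-xᵢ}·ξⱼ^{-xⱼ}` attached to the (unordered) edge `e = {i,j}`. -/
noncomputable def edgeFactor {V : Type*} (βw : Sym2 V → ℝ) (ξ : V → ℝ) (x : V → ℤ)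
    (e : Sym2 V) : ℝ :=
  Sym2.lift ⟨fun i j =>
      1 + ((x i : ℝ) * (x j : ℝ)) * βw e * ξ i ^ (-(x i)) * ξ j ^ (-(x j)),
    by intro i j; ring⟩ e

lemma isingF_aeval_sub_inv_mul_add_inv {K : Type*} [Field K] {u : K} (hu : u ≠ 0) :
    ∀ n : ℕ, aeval (u - u⁻¹) (isingF n) * (u + u⁻¹) = u ^ n * u⁻¹ + (-u⁻¹) ^ n * u
  | 0 => by simp [isingF, add_comm]
  | 1 => by simp [isingF, hu]
  | n + 2 => by
    have ih₁ := isingF_aeval_sub_inv_mul_add_inv hu (n + 1)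
    have ih₀ := isingF_aeval_sub_inv_mul_add_inv hu n
    simp only [isingF, map_add, map_mul, aeval_X]
    linear_combination (u - u⁻¹) * ih₁ + ih₀
      - (u ^ n * u⁻¹ + (-u⁻¹) ^ n * u) * mul_inv_cancel₀ hu

lemma sum_spin_pow_mul_zpow_spin {K : Type*} [Field K] {u : K} (hu : u ≠ 0) (n : ℕ) :
    ∑ b : Bool, (-(spin b : K) * u ^ (-spin b)) ^ n * u ^ spin b
      = aeval (u - u⁻¹) (isingF n) * (u + u⁻¹) := by
  simp [isingF_aeval_sub_inv_mul_add_inv hu, spin, add_comm]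

lemma prod_pow_degIn {V M : Type*} [Fintype V] [DecidableEq V] [CommMonoid M] (h : V → M)
    {s : Finset (Sym2 V)} (hs : ∀ e ∈ s, ¬ e.IsDiag) :
    ∏ i, h i ^ degIn s i
      = ∏ e ∈ s, Sym2.lift ⟨fun i j => h i * h j, fun _ _ => mul_comm _ _⟩ e := by
  calc ∏ i, h i ^ degIn s i = ∏ i, ∏ e ∈ s with i ∈ e, h i := by simp [degIn]
    _ = ∏ e ∈ s, ∏ i with i ∈ e, h i := Finset.prod_comm' (by simp [and_comm])
    _ = _ := by
      refine Finset.prod_congr rfl fun e he => ?_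
      induction e with
      | _ a b =>
        have hab : a ≠ b := by simpa using hs _ he
        have hmem : ({i | i ∈ s(a, b)} : Finset V) = {a, b} := by ext; simp
        rw [hmem, Finset.prod_pair hab]
        rfl

lemma prod_edgeFactor_eq_sum_powerset {V : Type*} [Fintype V] [DecidableEq V]
    (βw : Sym2 V → ℝ) (ξ : V → ℝ) (x : V → ℤ) {E : Finset (Sym2 V)}
    (hE : ∀ e ∈ E, ¬ e.IsDiag) :
    ∏ e ∈ E, edgeFactor βw ξ x e
      = ∑ s ∈ E.powerset, (∏ e ∈ s, βw e) * ∏ i, (-(x i : ℝ) * ξ i ^ (-x i)) ^ degIn s i := by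
  have hfactor : ∀ e, edgeFactor βw ξ x e = 1 + βw e * Sym2.lift
      ⟨fun i j => (-(x i : ℝ) * ξ i ^ (-x i)) * (-(x j : ℝ) * ξ j ^ (-x j)),
        fun _ _ => mul_comm _ _⟩ e := by
    intro e
    induction e with
    | _ a b =>
      simp only [edgeFactor, Sym2.lift_mk]
      ring
  simp_rw [hfactor, Finset.prod_one_add]
  refine Finset.sum_congr rfl fun s hs => ?_
  rw [Finset.prod_mul_distrib, prod_pow_degIn _ fun e he => hE e (Finset.mem_powerset.1 hs he)]

theorem theta_vertex_state_sum {V : Type*} [Fintype V] [DecidableEq V]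
    (G : SimpleGraph V) [DecidableRel G.Adj]
    (βw : Sym2 V → ℝ) (ξ : V → ℝ) (hξ : ∀ i, ξ i ≠ 0) :
    ∑ s ∈ G.edgeFinset.powerset,
        (∏ e ∈ s, βw e) * ∏ i : V, Polynomial.aeval (ξ i - (ξ i)⁻¹) (isingF (degIn s i))
      = ∑ σ : V → Bool,
          (∏ e ∈ G.edgeFinset, edgeFactor βw ξ (fun i => spin (σ i)) e)
            * ∏ i : V, ξ i ^ (spin (σ i)) / (ξ i + (ξ i)⁻¹) := by
  have hvertex : ∀ i d, ∑ b : Bool,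
      (-(spin b : ℝ) * ξ i ^ (-spin b)) ^ d * (ξ i ^ spin b / (ξ i + (ξ i)⁻¹))
        = aeval (ξ i - (ξ i)⁻¹) (isingF d) := by
    intro i d
    have hpos : 0 < (ξ i + (ξ i)⁻¹) * ξ i := by
      rw [add_mul, inv_mul_cancel₀ (hξ i)]
      exact add_pos_of_nonneg_of_pos (mul_self_nonneg _) one_pos
    simp_rw [← mul_div_assoc, ← Finset.sum_div, sum_spin_pow_mul_zpow_spin (hξ i)]
    exact mul_div_cancel_right₀ _ (left_ne_zero_of_mul hpos.ne')
  symm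
  simp_rw [prod_edgeFactor_eq_sum_powerset βw ξ _ fun e he => G.not_isDiag_of_mem_edgeFinset he,
    Finset.sum_mul]
  rw [Finset.sum_comm]
  refine Finset.sum_congr rfl fun s _ => ?_
  simp_rw [mul_assoc, ← Finset.mul_sum, ← Finset.prod_mul_distrib]
  simp_rw [← hvertex, Fintype.prod_sum]
end

section
/- Let G = (V,E) be a finite simple graph with |E| ≥ |V|. Then in ℤ[β], the polynomial (1-β)^{|E|-|V|} divides Σ_{s ⊆ E} (-β)^{|s|} · Π_{i ∈ V} (1 - deg_s(i)). -/
/-!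
Each factor splits as `1 - deg_s(i) = ∑_o (-1)^|o| [o ⊆ s]`, where `o` is either empty or a single
edge of `E` at `i`. Expanding the product over `V` therefore writes `∏_i (1 - deg_s(i))` as a
combination of indicators `[A ⊆ s]` with `|A| ≤ |V|`, and each indicator contributes
`∑_{A ⊆ s ⊆ E} x^|s| = x^|A| (1 + x)^(|E| - |A|)`, a multiple of `(1 + x)^(|E| - |V|)`.
The theorem is the case `x = -β`.
-/

open Polynomial

open Finset

section SupersetSums

variable {α R : Type*} [DecidableEq α] [CommSemiring R]

theorem Finset.sum_Icc_pow_card (x : R) {A E : Finset α} (hAE : A ⊆ E) :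
    ∑ s ∈ Icc A E, x ^ #s = x ^ #A * (1 + x) ^ (#E - #A) := by
  have hinj : Set.InjOn (A ∪ ·) (E \ A).powerset := fun t ht u hu htu => by
    have ht' : Disjoint A t := disjoint_of_subset_right (mem_powerset.1 ht) disjoint_sdiff
    have hu' : Disjoint A u := disjoint_of_subset_right (mem_powerset.1 hu) disjoint_sdiff
    simpa [union_sdiff_cancel_left ht', union_sdiff_cancel_left hu'] using
      congrArg (· \ A) htu
  rw [Icc_eq_image_powerset hAE, sum_image hinj, ← card_sdiff_of_subset hAE, add_comm,
    ← sum_pow_mul_eq_add_pow, mul_sum]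
  refine sum_congr rfl fun t ht => ?_
  rw [card_union_of_disjoint (disjoint_of_subset_right (mem_powerset.1 ht) disjoint_sdiff),
    one_pow, mul_one, pow_add]

theorem Finset.sum_powerset_mul_boole_subset (f : Finset α → R) (A E : Finset α) :
    ∑ s ∈ E.powerset, f s * (if A ⊆ s then 1 else 0) = ∑ s ∈ Icc A E, f s := by
  simp only [mul_ite, mul_one, mul_zero, ← sum_filter]
  congr 1
  ext s
  simp [and_comm]

theorem one_add_pow_dvd_sum_powerset_pow_card_mul {ι : Type*} (x : R) (E : Finset α) (n : ℕ)
    (T : Finset ι) (c : ι → R) (A : ι → Finset α) (hAE : ∀ j ∈ T, A j ⊆ E)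
    (hA : ∀ j ∈ T, #(A j) ≤ n) :
    (1 + x) ^ (#E - n) ∣
      ∑ s ∈ E.powerset, x ^ #s * ∑ j ∈ T, c j * (if A j ⊆ s then 1 else 0) := by
  simp only [mul_sum, mul_left_comm (x ^ _)]
  rw [sum_comm]
  refine dvd_sum fun j hj => ?_
  rw [← mul_sum, sum_powerset_mul_boole_subset, sum_Icc_pow_card x (hAE j hj)]
  exact Dvd.dvd.mul_left (Dvd.dvd.mul_left (pow_dvd_pow _ (by have := hA j hj; omega)) _) _

end SupersetSums

section Degrees

variable {V R : Type*} [DecidableEq V] [CommRing R]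

def incidenceChoices (E : Finset (Sym2 V)) (i : V) : Finset (Option (Sym2 V)) :=
  insert none ((E.filter (i ∈ ·)).map .some)

theorem one_sub_degIn_eq_sum {E s : Finset (Sym2 V)} (hs : s ⊆ E) (i : V) :
    1 - (degIn s i : R) = ∑ o ∈ incidenceChoices E i,
      (-1) ^ #o.toFinset * (if o.toFinset ⊆ s then 1 else 0) := by
  have hdeg : s.filter (i ∈ ·) = (E.filter (i ∈ ·)).filter (· ∈ s) := by
    ext e
    simp only [mem_filter]
    exact ⟨fun h => ⟨⟨hs h.1, h.2⟩, h.1⟩, fun h => ⟨h.2, h.1.2⟩⟩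
  rw [incidenceChoices, sum_insert (by simp), sum_map, degIn, hdeg, card_filter]
  simp [sub_eq_add_neg, sum_neg_distrib]

theorem prod_one_sub_degIn_eq_sum [Fintype V] {E s : Finset (Sym2 V)} (hs : s ⊆ E) :
    ∏ i, (1 - (degIn s i : R)) = ∑ F ∈ Fintype.piFinset (incidenceChoices E),
      (∏ i, (-1) ^ #(F i).toFinset) *
        (if univ.biUnion (fun i => (F i).toFinset) ⊆ s then 1 else 0) := by
  simp_rw [one_sub_degIn_eq_sum hs, prod_univ_sum, prod_mul_distrib, prod_boole,
    biUnion_subset, mem_univ]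

theorem one_add_pow_dvd_sum_powerset_pow_card_mul_prod_one_sub_degIn [Fintype V]
    (x : R) (E : Finset (Sym2 V)) :
    (1 + x) ^ (#E - Fintype.card V) ∣
      ∑ s ∈ E.powerset, x ^ #s * ∏ i, (1 - (degIn s i : R)) := by
  rw [sum_congr rfl fun s hs => by rw [prod_one_sub_degIn_eq_sum (mem_powerset.1 hs)]]
  refine one_add_pow_dvd_sum_powerset_pow_card_mul x E _ _ _ _ ?_ ?_
  · intro F hF
    refine biUnion_subset.2 fun i _ o ho => ?_
    have := Fintype.mem_piFinset.1 hF i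
    cases hFi : F i <;> simp_all [incidenceChoices]
  · intro F _
    calc #(univ.biUnion fun i => (F i).toFinset) ≤ ∑ i, #(F i).toFinset := card_biUnion_le
      _ ≤ ∑ _i : V, 1 := sum_le_sum fun i _ => by cases F i <;> simp
      _ = Fintype.card V := by simp

end Degrees

theorem one_sub_beta_pow_dvd_theta_general {V : Type*} [Fintype V] [DecidableEq V]
    (G : SimpleGraph V) [DecidableRel G.Adj] :
    (1 - X : Polynomial ℤ) ^ (G.edgeFinset.card - Fintype.card V) ∣
      ∑ s ∈ G.edgeFinset.powerset,
        (-X : Polynomial ℤ) ^ s.card * ∏ i : V, (1 - (degIn s i : Polynomial ℤ)) := by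
  simpa only [← sub_eq_add_neg] using
    one_add_pow_dvd_sum_powerset_pow_card_mul_prod_one_sub_degIn (-X : ℤ[X]) G.edgeFinset

theorem one_sub_beta_pow_dvd_theta {V : Type*} [Fintype V] [DecidableEq V]
    (G : SimpleGraph V) [DecidableRel G.Adj] (h : Fintype.card V ≤ G.edgeFinset.card) :
    (1 - X : Polynomial ℤ) ^ (G.edgeFinset.card - Fintype.card V) ∣
      ∑ s ∈ G.edgeFinset.powerset,
        (-X : Polynomial ℤ) ^ s.card * ∏ i : V, (1 - (degIn s i : Polynomial ℤ)) :=
  one_sub_beta_pow_dvd_theta_general G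
end
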